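/- Convexity-based mixing bound for coherence: for any finite ensemble {p_x, ρ_x} of density matrices, C_r(∑_x p_x ρ_x) ≤ ∑_x p_x C_r(ρ_x) + H({p_x}), where H is the Shannon entropy of the mixing distribution. -/

import Mathlib

/-!
Write ρ̄ = ∑ₓ pₓ ρₓ. Dephasing is linear, so the diagonal of ρ̄ is the p-mixture of the
diagonals of the ρₓ, and the entropy of a mixture of distributions is at most their average
entropy plus H(p); this bounds S(Δ ρ̄) from above. In an eigenbasis of ρ̄ the spectrum of ρ̄ is
the p-mixture of the diagonals of the ρₓ in that basis, so concavity of -t log t bounds S(ρ̄)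
from below by the p-average of the entropies of those diagonals, and each of these is at least
S(ρₓ) because the diagonal of a state in any orthonormal basis is the image of its spectrum
under a doubly stochastic matrix.
-/

open Matrix BigOperators
open scoped Kronecker ComplexOrder

/-- Von Neumann entropy in bits, via eigenvalues of a Hermitian matrix
(0 for non-Hermitian matrices, by convention). -/
noncomputable def vNE {n : Type*} [Fintype n] [DecidableEq n]
    (ρ : Matrix n n ℂ) : ℝ :=
  if h : ρ.IsHermitian then -∑ i, h.eigenvalues i * Real.logb 2 (h.eigenvalues i) else 0

/-- Full dephasing in the computational (standard) basis. -/
noncomputable def dephase {n : Type*} [Fintype n] [DecidableEq n]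
    (ρ : Matrix n n ℂ) : Matrix n n ℂ :=
  Matrix.diagonal (fun i => ρ i i)

/-- Relative entropy of coherence, in bits. -/
noncomputable def Cr {n : Type*} [Fintype n] [DecidableEq n]
    (ρ : Matrix n n ℂ) : ℝ :=
  vNE (dephase ρ) - vNE ρ

/-- Density matrix predicate. -/
def IsDensity {n : Type*} [Fintype n] [DecidableEq n]
    (ρ : Matrix n n ℂ) : Prop :=
  ρ.PosSemidef ∧ ρ.trace = 1

/-- The rank-one projector |ψ⟩⟨ψ|. -/
noncomputable def pureState {n : Type*} [Fintype n] [DecidableEq n]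
    (ψ : n → ℂ) : Matrix n n ℂ :=
  Matrix.vecMulVec ψ (star ψ)

/-- Shannon entropy in bits (with the convention 0 · log₂ 0 = 0). -/
noncomputable def shannon {n : Type*} [Fintype n] (p : n → ℝ) : ℝ :=
  -∑ i, p i * Real.logb 2 (p i)

/-- Complete positivity of a linear map on matrices: Λ ⊗ id_k preserves
positive semidefiniteness for every k. -/
def IsCompletelyPositive {n : Type*} [Fintype n] [DecidableEq n]
    (Λ : Matrix n n ℂ →ₗ[ℂ] Matrix n n ℂ) : Prop :=
  ∀ (k : ℕ) (ρ : Matrix (n × Fin k) (n × Fin k) ℂ), ρ.PosSemidef →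
    (Matrix.of fun (p q : n × Fin k) =>
      Λ (Matrix.of fun i j => ρ (i, p.2) (j, q.2)) p.1 q.1).PosSemidef

/-- Trace preservation. -/
def IsTracePreserving {n : Type*} [Fintype n] [DecidableEq n]
    (Λ : Matrix n n ℂ →ₗ[ℂ] Matrix n n ℂ) : Prop :=
  ∀ ρ : Matrix n n ℂ, (Λ ρ).trace = ρ.trace

open Real

noncomputable def negMulLogb (t : ℝ) : ℝ := -(t * logb 2 t)

lemma negMulLogb_eq_div (t : ℝ) : negMulLogb t = negMulLog t / log 2 := by
  rw [negMulLogb, negMulLog, logb]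
  ring

lemma concaveOn_negMulLogb : ConcaveOn ℝ (Set.Ici 0) negMulLogb := by
  have h : negMulLogb = fun t => (log 2)⁻¹ * negMulLog t := by
    ext t
    rw [negMulLogb_eq_div, div_eq_inv_mul]
  rw [h]
  exact concaveOn_negMulLog.smul (inv_nonneg.2 (log_nonneg one_le_two))

lemma negMulLogb_mul (x y : ℝ) : negMulLogb (x * y) = y * negMulLogb x + x * negMulLogb y := by
  simp only [negMulLogb_eq_div, negMulLog_mul]
  ring

lemma negMulLogb_sum_le {ι : Type*} (s : Finset ι) {a : ι → ℝ} (ha : ∀ i ∈ s, 0 ≤ a i) :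
    negMulLogb (∑ i ∈ s, a i) ≤ ∑ i ∈ s, negMulLogb (a i) := by
  rw [negMulLogb, Finset.sum_mul, ← Finset.sum_neg_distrib]
  refine Finset.sum_le_sum fun i hi => neg_le_neg ?_
  rcases (ha i hi).eq_or_lt with h0 | hpos
  · simp [← h0]
  · exact mul_le_mul_of_nonneg_left
      (logb_le_logb_of_le one_lt_two hpos (Finset.single_le_sum ha hi)) hpos.le

lemma shannon_eq_sum_negMulLogb {ι : Type*} [Fintype ι] (p : ι → ℝ) :
    shannon p = ∑ x, negMulLogb (p x) := by
  rw [shannon, ← Finset.sum_neg_distrib]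
  rfl

lemma Matrix.IsHermitian.vNE_eq {n : Type*} [Fintype n] [DecidableEq n] {A : Matrix n n ℂ}
    (hA : A.IsHermitian) : vNE A = ∑ i, negMulLogb (hA.eigenvalues i) := by
  rw [vNE, dif_pos hA, ← Finset.sum_neg_distrib]
  rfl

-- H(i) ≤ H(x, i) = H(x) + H(i | x) for the joint law pₓ qₓᵢ.
lemma sum_negMulLogb_mix_le {ι κ : Type*} [Fintype ι] [Fintype κ] {p : ι → ℝ} {q : ι → κ → ℝ}
    (hp : ∀ x, 0 ≤ p x) (hq : ∀ x i, 0 ≤ q x i) (hq1 : ∀ x, ∑ i, q x i = 1) :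
    ∑ i, negMulLogb (∑ x, p x * q x i)
      ≤ ∑ x, p x * ∑ i, negMulLogb (q x i) + ∑ x, negMulLogb (p x) :=
  calc ∑ i, negMulLogb (∑ x, p x * q x i)
      ≤ ∑ i, ∑ x, negMulLogb (p x * q x i) := Finset.sum_le_sum fun i _ =>
        negMulLogb_sum_le _ fun x _ => mul_nonneg (hp x) (hq x i)
    _ = ∑ x, ∑ i, (q x i * negMulLogb (p x) + p x * negMulLogb (q x i)) := by
        rw [Finset.sum_comm]
        simp only [negMulLogb_mul]
    _ = ∑ x, p x * ∑ i, negMulLogb (q x i) + ∑ x, negMulLogb (p x) := by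
        simp only [Finset.sum_add_distrib, ← Finset.sum_mul, ← Finset.mul_sum, hq1, one_mul]
        ring

lemma posSemidef_sum_ofReal_smul {n ι : Type*} [Fintype ι] {p : ι → ℝ} (hp : ∀ x, 0 ≤ p x)
    {ρ : ι → Matrix n n ℂ} (hρ : ∀ x, (ρ x).PosSemidef) :
    (∑ x, (p x : ℂ) • ρ x).PosSemidef :=
  posSemidef_sum _ fun x _ => (hρ x).smul (Complex.zero_le_real.2 (hp x))

variable {n : Type*} [Fintype n] [DecidableEq n]

lemma sum_negMulLogb_le_sum_negMulLogb_mulVec {M : Matrix n n ℝ}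
    (hM : M ∈ doublyStochastic ℝ n) {t : n → ℝ} (ht : ∀ k, 0 ≤ t k) :
    ∑ k, negMulLogb (t k) ≤ ∑ i, negMulLogb ((M *ᵥ t) i) :=
  calc ∑ k, negMulLogb (t k) = ∑ i, ∑ k, M i k * negMulLogb (t k) := by
        simp only [Finset.sum_comm (γ := n) (f := fun i k => M i k * _), ← Finset.sum_mul,
          sum_col_of_mem_doublyStochastic hM, one_mul]
    _ ≤ ∑ i, negMulLogb ((M *ᵥ t) i) := Finset.sum_le_sum fun i _ =>
        concaveOn_negMulLogb.le_map_sum (fun k _ => nonneg_of_mem_doublyStochastic hM)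
          (sum_row_of_mem_doublyStochastic hM i) (fun k _ => ht k)

lemma normSq_mem_doublyStochastic {U : Matrix n n ℂ} (hU : U ∈ unitaryGroup n ℂ) :
    Matrix.of (fun i j => Complex.normSq (U i j)) ∈ doublyStochastic ℝ n := by
  refine mem_doublyStochastic_iff_sum.2
    ⟨fun i j => Complex.normSq_nonneg _, fun i => ?_, fun j => ?_⟩
  · have h := congrFun (congrFun (mem_unitaryGroup_iff.1 hU) i) i
    simp only [mul_apply, star_apply, RCLike.star_def, Complex.mul_conj, one_apply_eq] at h
    exact_mod_cast h
  · have h := congrFun (congrFun (mem_unitaryGroup_iff'.1 hU) j) j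
    simp only [mul_apply, star_apply, RCLike.star_def, mul_comm (starRingEnd ℂ _),
      Complex.mul_conj, one_apply_eq] at h
    exact_mod_cast h

lemma star_mul_diagonal_mul_apply_self (W : Matrix n n ℂ) (μ : n → ℝ) (i : n) :
    (star W * diagonal (RCLike.ofReal ∘ μ : n → ℂ) * W) i i =
      ((∑ m, Complex.normSq (W m i) * μ m : ℝ) : ℂ) := by
  simp only [mul_apply, diagonal_apply, star_apply, RCLike.star_def, mul_ite, mul_zero,
    Finset.sum_ite_eq', Finset.mem_univ, if_true]
  push_cast
  refine Finset.sum_congr rfl fun m _ => ?_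
  rw [Function.comp_apply, ← Complex.mul_conj, mul_comm (W m i)]
  change _ * (μ m : ℂ) * _ = _
  ring

lemma Matrix.IsHermitian.star_mul_mul_apply_self {A : Matrix n n ℂ} (hA : A.IsHermitian)
    (V : Matrix n n ℂ) (i : n) :
    (star V * A * V) i i =
      ((∑ m, Complex.normSq ((star (hA.eigenvectorUnitary : Matrix n n ℂ) * V) m i)
        * hA.eigenvalues m : ℝ) : ℂ) := by
  rw [← star_mul_diagonal_mul_apply_self]
  conv_lhs => rw [hA.spectral_theorem, Unitary.conjStarAlgAut_apply]
  simp only [star_mul, star_star, Matrix.mul_assoc]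

-- The diagonal of V⋆ A V is the spectrum of A mixed by the doubly stochastic matrix
-- |(E⋆ V)ₘᵢ|², E an eigenbasis of A, and -t log t is concave.
lemma vNE_le_sum_negMulLogb_diag_star_mul_mul {A : Matrix n n ℂ} (hA : A.PosSemidef)
    {V : Matrix n n ℂ} (hV : V ∈ unitaryGroup n ℂ) :
    vNE A ≤ ∑ i, negMulLogb ((star V * A * V) i i).re := by
  set W : Matrix n n ℂ := star (hA.1.eigenvectorUnitary : Matrix n n ℂ) * V
  have hW : W ∈ unitaryGroup n ℂ := mul_mem (Unitary.star_mem hA.1.eigenvectorUnitary.2) hV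
  have hM := transpose_mem_doublyStochastic_iff.2 (normSq_mem_doublyStochastic hW)
  have := sum_negMulLogb_le_sum_negMulLogb_mulVec hM hA.eigenvalues_nonneg
  simpa [hA.1.vNE_eq, hA.1.star_mul_mul_apply_self, mulVec, dotProduct] using this

-- The eigenvalues of a diagonal matrix are its entries up to order: both are the roots of its
-- characteristic polynomial.
lemma vNE_diagonal (r : n → ℝ) :
    vNE (diagonal (RCLike.ofReal ∘ r) : Matrix n n ℂ) = ∑ i, negMulLogb (r i) := by
  have hD : (diagonal (RCLike.ofReal ∘ r) : Matrix n n ℂ).IsHermitian :=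
    isHermitian_diagonal_iff.2 fun i => by simp [IsSelfAdjoint]
  have h := hD.roots_charpoly_eq_eigenvalues
  rw [charpoly_diagonal, Polynomial.roots_prod _ _
    (by simp [Finset.prod_ne_zero_iff, Polynomial.X_sub_C_ne_zero])] at h
  have h' : Finset.univ.val.map hD.eigenvalues = Finset.univ.val.map r := by
    simpa [Multiset.map_map, Function.comp_def] using (congrArg (Multiset.map RCLike.re) h).symm
  calc vNE (diagonal (RCLike.ofReal ∘ r) : Matrix n n ℂ)
      = ((Finset.univ.val.map hD.eigenvalues).map negMulLogb).sum := by
        rw [hD.vNE_eq, Multiset.map_map]; rfl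
    _ = ∑ i, negMulLogb (r i) := by
        rw [h', Multiset.map_map]; rfl

lemma Matrix.IsHermitian.vNE_dephase {A : Matrix n n ℂ} (hA : A.IsHermitian) :
    vNE (dephase A) = ∑ i, negMulLogb (A i i).re := by
  rw [← vNE_diagonal, dephase]
  congr 2
  ext i
  exact (congrFun hA.coe_re_diag i).symm

lemma vNE_dephase_sum_le {ι : Type*} [Fintype ι] {p : ι → ℝ} (hp : ∀ x, 0 ≤ p x)
    {ρ : ι → Matrix n n ℂ} (hρ : ∀ x, IsDensity (ρ x)) :
    vNE (dephase (∑ x, (p x : ℂ) • ρ x))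
      ≤ ∑ x, p x * vNE (dephase (ρ x)) + shannon p := by
  have hdiag : ∀ x i, 0 ≤ (ρ x i i).re := fun x i =>
    (Complex.nonneg_iff.1 (hρ x).1.diag_nonneg).1
  have htrace : ∀ x, ∑ i, (ρ x i i).re = 1 := fun x => by
    simpa [trace] using congrArg Complex.re (hρ x).2
  rw [(posSemidef_sum_ofReal_smul hp fun x => (hρ x).1).1.vNE_dephase,
    shannon_eq_sum_negMulLogb]
  simp only [fun x => (hρ x).1.1.vNE_dephase]
  simpa [Matrix.sum_apply] using sum_negMulLogb_mix_le hp hdiag htrace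

lemma sum_mul_vNE_le_vNE_sum {ι : Type*} [Fintype ι] {p : ι → ℝ} (hp0 : ∀ x, 0 ≤ p x)
    (hp1 : ∑ x, p x = 1) {ρ : ι → Matrix n n ℂ} (hρ : ∀ x, (ρ x).PosSemidef) :
    ∑ x, p x * vNE (ρ x) ≤ vNE (∑ x, (p x : ℂ) • ρ x) := by
  set A := ∑ x, (p x : ℂ) • ρ x
  have hA : A.IsHermitian := (posSemidef_sum_ofReal_smul hp0 hρ).1
  set U := hA.eigenvectorUnitary
  set d : ι → n → ℝ := fun x i => ((star (U : Matrix n n ℂ) * ρ x * U) i i).re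
  have hd : ∀ x i, 0 ≤ d x i := fun x i =>
    (Complex.nonneg_iff.1 ((hρ x).conjTranspose_mul_mul_same (U : Matrix n n ℂ)).diag_nonneg).1
  have heig : ∀ i, hA.eigenvalues i = ∑ x, p x * d x i := by
    intro i
    have h := congrFun (congrFun hA.conjStarAlgAut_star_eigenvectorUnitary i) i
    simp only [A, Complex.coe_smul, map_sum, Unitary.conjStarAlgAut_apply, Unitary.coe_star,
      Algebra.mul_smul_comm, star_star, Algebra.smul_mul_assoc, Matrix.sum_apply,
      Matrix.smul_apply, Complex.real_smul, Complex.coe_algebraMap, diagonal_apply_eq,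
      Function.comp_apply] at h
    simpa [d] using (congrArg Complex.re h).symm
  calc ∑ x, p x * vNE (ρ x) ≤ ∑ x, p x * ∑ i, negMulLogb (d x i) :=
        Finset.sum_le_sum fun x _ => mul_le_mul_of_nonneg_left
          (vNE_le_sum_negMulLogb_diag_star_mul_mul (hρ x) U.2) (hp0 x)
    _ = ∑ i, ∑ x, p x * negMulLogb (d x i) := by
        simp only [Finset.mul_sum]
        exact Finset.sum_comm
    _ ≤ ∑ i, negMulLogb (∑ x, p x * d x i) := Finset.sum_le_sum fun i _ =>
        concaveOn_negMulLogb.le_map_sum (fun x _ => hp0 x) hp1 (fun x _ => hd x i)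
    _ = vNE A := by simp only [hA.vNE_eq, heig]

/-- convexity-based mixing bound for coherence:
C_r(∑ₓ pₓ ρₓ) ≤ ∑ₓ pₓ C_r(ρₓ) + H(p). -/
theorem coherence_mixing_bound {d N : ℕ}
    (p : Fin N → ℝ) (hp0 : ∀ x, 0 ≤ p x) (hp1 : ∑ x, p x = 1)
    (ρ : Fin N → Matrix (Fin d) (Fin d) ℂ) (hρ : ∀ x, IsDensity (ρ x)) :
    Cr (∑ x, (p x : ℂ) • ρ x) ≤ ∑ x, p x * Cr (ρ x) + shannon p := by
  have upper := vNE_dephase_sum_le hp0 hρ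
  have lower := sum_mul_vNE_le_vNE_sum hp0 hp1 fun x => (hρ x).1
  simp only [Cr, mul_sub, Finset.sum_sub_distrib]
  linarith
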